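/- arXiv:1909.12883 — 3 statements merged into one kernel-verified Lean document; each statement's English description precedes it below -/
import Mathlib

section
/- Let H be a reproducing kernel Hilbert space on X, and let (φ_n), (ψ_n) be sequences of multipliers of H such that the column operators f ↦ (φ_n f)_n and f ↦ (ψ_n f)_n are contractions from H to H ⊗ ℓ². Then θ := ∑_n φ_n ψ_n (which converges pointwise absolutely) is a contractive multiplier of the weak product space H⊙H, i.e., ‖θh‖_{H⊙H} ≤ ‖h‖_{H⊙H} for all h ∈ H⊙H. -/
open scoped InnerProductSpace

/-- Evaluation of an element `f` of an RKHS with kernel map `k` at a point `x`. -/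
noncomputable def ev {X H : Type*} [NormedAddCommGroup H] [InnerProductSpace ℂ H]
    (k : X → H) (f : H) (x : X) : ℂ := ⟪k x, f⟫_ℂ

/-- `T` is the multiplication operator on `H` with multiplier symbol `φ`. -/
def IsMult {X H : Type*} [NormedAddCommGroup H] [InnerProductSpace ℂ H]
    (k : X → H) (φ : X → ℂ) (T : H →L[ℂ] H) : Prop :=
  ∀ (f : H) (x : X), ev k (T f) x = φ x * ev k f x

/-- A weak-product representation `h = ∑ᵢ fᵢ gᵢ` with `∑ᵢ ‖fᵢ‖ ‖gᵢ‖ < ∞`. -/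
def IsWPRep {X H : Type*} [NormedAddCommGroup H] [InnerProductSpace ℂ H]
    (k : X → H) (h : X → ℂ) (f g : ℕ → H) : Prop :=
  (Summable fun i => ‖f i‖ * ‖g i‖) ∧
    ∀ x, HasSum (fun i => ev k (f i) x * ev k (g i) x) (h x)

/-- The weak product norm on `H ⊙ H`. -/
noncomputable def wpNorm {X H : Type*} [NormedAddCommGroup H] [InnerProductSpace ℂ H]
    (k : X → H) (h : X → ℂ) : ℝ :=
  sInf { c : ℝ | ∃ f g : ℕ → H, IsWPRep k h f g ∧ c = ∑' i, ‖f i‖ * ‖g i‖ }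

set_option maxHeartbeats 1000000 in
/-- Cauchy–Schwarz for tsums of nonnegative reals. -/
private lemma cs_tsum {a b : ℕ → ℝ} (ha0 : ∀ n, 0 ≤ a n) (hb0 : ∀ n, 0 ≤ b n)
    (ha : Summable fun n => a n ^ 2) (hb : Summable fun n => b n ^ 2) :
    Summable (fun n => a n * b n) ∧
      ∑' n, a n * b n ≤ Real.sqrt (∑' n, a n ^ 2) * Real.sqrt (∑' n, b n ^ 2) := by
  have hsum : Summable fun n => a n * b n := by
    refine Summable.of_nonneg_of_le (fun n => mul_nonneg (ha0 n) (hb0 n))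
      (fun n => ?_) ((ha.add hb).div_const 2)
    nlinarith [sq_nonneg (a n - b n)]
  refine ⟨hsum, Summable.tsum_le_of_sum_le hsum fun s => ?_⟩
  calc ∑ i ∈ s, a i * b i
      ≤ Real.sqrt (∑ i ∈ s, a i ^ 2) * Real.sqrt (∑ i ∈ s, b i ^ 2) :=
        Real.sum_mul_le_sqrt_mul_sqrt s a b
    _ ≤ Real.sqrt (∑' n, a n ^ 2) * Real.sqrt (∑' n, b n ^ 2) := by
        apply mul_le_mul
        · exact Real.sqrt_le_sqrt (Summable.sum_le_tsum s (fun i _ => sq_nonneg _) ha)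
        · exact Real.sqrt_le_sqrt (Summable.sum_le_tsum s (fun i _ => sq_nonneg _) hb)
        · positivity
        · positivity

private lemma ev_bound {X H : Type*} [NormedAddCommGroup H] [InnerProductSpace ℂ H]
    (k : X → H) (v : H) (x : X) : ‖ev k v x‖ ≤ ‖k x‖ * ‖v‖ :=
  norm_inner_le_norm (k x) v

set_option maxHeartbeats 1000000 in
private lemma construct {X H : Type*} [NormedAddCommGroup H] [InnerProductSpace ℂ H]
    (k : X → H)
    (φ ψ : ℕ → X → ℂ) (T S : ℕ → H →L[ℂ] H)
    (hφ : ∀ n, IsMult k (φ n) (T n)) (hψ : ∀ n, IsMult k (ψ n) (S n))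
    (hTcol : ∀ f : H, (Summable fun n => ‖T n f‖ ^ 2) ∧ ∑' n, ‖T n f‖ ^ 2 ≤ ‖f‖ ^ 2)
    (hScol : ∀ f : H, (Summable fun n => ‖S n f‖ ^ 2) ∧ ∑' n, ‖S n f‖ ^ 2 ≤ ‖f‖ ^ 2)
    (θ : X → ℂ) (hθ : ∀ x, HasSum (fun n => φ n x * ψ n x) (θ x))
    (h : X → ℂ) (f g : ℕ → H) (hrep : IsWPRep k h f g) :
    ∃ F G : ℕ → H, IsWPRep k (fun x => θ x * h x) F G ∧
      ∑' j, ‖F j‖ * ‖G j‖ ≤ ∑' i, ‖f i‖ * ‖g i‖ := by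
  classical
  set e : ℕ ≃ ℕ × ℕ := (Denumerable.eqv (ℕ × ℕ)).symm with he
  set P : ℕ × ℕ → ℝ := fun p => ‖T p.2 (f p.1)‖ * ‖S p.2 (g p.1)‖ with hP
  have claim1 : ∀ i, Summable (fun n => P (i, n)) ∧ ∑' n, P (i, n) ≤ ‖f i‖ * ‖g i‖ := by
    intro i
    obtain ⟨hs, hle⟩ := cs_tsum (a := fun n => ‖T n (f i)‖) (b := fun n => ‖S n (g i)‖)
      (fun n => norm_nonneg _) (fun n => norm_nonneg _) (hTcol (f i)).1 (hScol (g i)).1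
    refine ⟨hs, hle.trans ?_⟩
    apply mul_le_mul
    · exact (Real.sqrt_le_sqrt (hTcol (f i)).2).trans
        (by rw [Real.sqrt_sq (norm_nonneg _)])
    · exact (Real.sqrt_le_sqrt (hScol (g i)).2).trans
        (by rw [Real.sqrt_sq (norm_nonneg _)])
    · positivity
    · exact norm_nonneg _
  have hPnn : (0 : ℕ × ℕ → ℝ) ≤ P := fun p => mul_nonneg (norm_nonneg _) (norm_nonneg _)
  have claim2 : Summable P := by
    rw [summable_prod_of_nonneg hPnn]
    exact ⟨fun i => (claim1 i).1,
      Summable.of_nonneg_of_le (fun i => tsum_nonneg fun n => hPnn (i, n))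
        (fun i => (claim1 i).2) hrep.1⟩
  have claim3 : ∑' p, P p ≤ ∑' i, ‖f i‖ * ‖g i‖ := by
    rw [Summable.tsum_prod' claim2 fun i => (claim1 i).1]
    exact Summable.tsum_le_tsum (fun i => (claim1 i).2)
      ((summable_prod_of_nonneg hPnn).mp claim2).2 hrep.1
  refine ⟨fun j => T (e j).2 (f (e j).1), fun j => S (e j).2 (g (e j).1), ⟨?_, ?_⟩, ?_⟩
  · show Summable (P ∘ e)
    exact e.summable_iff.mpr claim2
  · intro x
    set Q : ℕ × ℕ → ℂ := fun p => ev k (T p.2 (f p.1)) x * ev k (S p.2 (g p.1)) x with hQ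
    have hQeq : ∀ p : ℕ × ℕ, Q p =
        (φ p.2 x * ψ p.2 x) * (ev k (f p.1) x * ev k (g p.1) x) := by
      intro p
      simp only [hQ, hφ p.2 (f p.1) x, hψ p.2 (g p.1) x]
      ring
    have hQsum : Summable Q := by
      apply Summable.of_norm
      refine Summable.of_nonneg_of_le (fun p => norm_nonneg _) (fun p => ?_)
        (claim2.mul_left (‖k x‖ * ‖k x‖))
      calc ‖Q p‖ = ‖ev k (T p.2 (f p.1)) x‖ * ‖ev k (S p.2 (g p.1)) x‖ := norm_mul _ _
        _ ≤ (‖k x‖ * ‖T p.2 (f p.1)‖) * (‖k x‖ * ‖S p.2 (g p.1)‖) := by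
            apply mul_le_mul (ev_bound ..) (ev_bound ..) (norm_nonneg _) (by positivity)
        _ = ‖k x‖ * ‖k x‖ * P p := by ring
    have fib : ∀ i, HasSum (fun n => Q (i, n))
        (θ x * (ev k (f i) x * ev k (g i) x)) := by
      intro i
      have := (hθ x).mul_right (ev k (f i) x * ev k (g i) x)
      simpa only [hQeq] using this
    have h1 : HasSum (fun i => θ x * (ev k (f i) x * ev k (g i) x)) (∑' p, Q p) :=
      hQsum.hasSum.prod_fiberwise fib
    have h2 : HasSum (fun i => θ x * (ev k (f i) x * ev k (g i) x)) (θ x * h x) :=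
      (hrep.2 x).mul_left (θ x)
    have : (∑' p, Q p) = θ x * h x := h1.unique h2
    have hfinal : HasSum Q (θ x * h x) := this ▸ hQsum.hasSum
    show HasSum (Q ∘ e) (θ x * h x)
    exact e.hasSum_iff.mpr hfinal
  · calc ∑' j, ‖T (e j).2 (f (e j).1)‖ * ‖S (e j).2 (g (e j).1)‖
        = ∑' p, P p := e.tsum_eq P
      _ ≤ _ := claim3

set_option maxHeartbeats 1000000 in
/-- If `(φₙ)` and `(ψₙ)` are sequences of multipliers of an RKHS `H`
whose column operators are contractions, then `θ = ∑ₙ φₙ ψₙ` converges pointwise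
absolutely and `θ` is a contractive multiplier of the weak product `H ⊙ H`:
`θ·h ∈ H ⊙ H` and `‖θ h‖_{H⊙H} ≤ ‖h‖_{H⊙H}` for every `h ∈ H ⊙ H`. -/
theorem stmt3 {X H : Type*} [NormedAddCommGroup H] [InnerProductSpace ℂ H]
    (k : X → H) (hk : ∀ x, k x ≠ 0)
    (φ ψ : ℕ → X → ℂ) (T S : ℕ → H →L[ℂ] H)
    (hφ : ∀ n, IsMult k (φ n) (T n)) (hψ : ∀ n, IsMult k (ψ n) (S n))
    (hTcol : ∀ f : H, (Summable fun n => ‖T n f‖ ^ 2) ∧ ∑' n, ‖T n f‖ ^ 2 ≤ ‖f‖ ^ 2)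
    (hScol : ∀ f : H, (Summable fun n => ‖S n f‖ ^ 2) ∧ ∑' n, ‖S n f‖ ^ 2 ≤ ‖f‖ ^ 2)
    (θ : X → ℂ) (hθ : ∀ x, HasSum (fun n => φ n x * ψ n x) (θ x)) :
    (∀ x, Summable fun n => ‖φ n x * ψ n x‖) ∧
      ∀ h : X → ℂ, (∃ f g : ℕ → H, IsWPRep k h f g) →
        (∃ f g : ℕ → H, IsWPRep k (fun x => θ x * h x) f g) ∧
          wpNorm k (fun x => θ x * h x) ≤ wpNorm k h := by
  constructor
  · intro x
    have hkx : (0 : ℝ) < ‖k x‖ := norm_pos_iff.mpr (hk x)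
    have keyφ : ∀ n, ‖φ n x‖ ≤ ‖T n (k x)‖ / ‖k x‖ := by
      intro n
      have h1 : ‖φ n x‖ * ‖k x‖ ^ 2 ≤ ‖k x‖ * ‖T n (k x)‖ := by
        calc ‖φ n x‖ * ‖k x‖ ^ 2 = ‖φ n x * ev k (k x) x‖ := by
              rw [norm_mul]
              simp [ev, inner_self_eq_norm_sq_to_K]
          _ = ‖ev k (T n (k x)) x‖ := by rw [hφ n (k x) x]
          _ ≤ ‖k x‖ * ‖T n (k x)‖ := ev_bound ..
      rw [le_div_iff₀ hkx]
      nlinarith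
    have keyψ : ∀ n, ‖ψ n x‖ ≤ ‖S n (k x)‖ / ‖k x‖ := by
      intro n
      have h1 : ‖ψ n x‖ * ‖k x‖ ^ 2 ≤ ‖k x‖ * ‖S n (k x)‖ := by
        calc ‖ψ n x‖ * ‖k x‖ ^ 2 = ‖ψ n x * ev k (k x) x‖ := by
              rw [norm_mul]
              simp [ev, inner_self_eq_norm_sq_to_K]
          _ = ‖ev k (S n (k x)) x‖ := by rw [hψ n (k x) x]
          _ ≤ ‖k x‖ * ‖S n (k x)‖ := ev_bound ..
      rw [le_div_iff₀ hkx]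
      nlinarith
    have hsummable := (cs_tsum (a := fun n => ‖T n (k x)‖ / ‖k x‖)
      (b := fun n => ‖S n (k x)‖ / ‖k x‖)
      (fun n => by positivity) (fun n => by positivity)
      (by simpa only [div_pow] using (hTcol (k x)).1.div_const (‖k x‖ ^ 2))
      (by simpa only [div_pow] using (hScol (k x)).1.div_const (‖k x‖ ^ 2))).1
    refine Summable.of_nonneg_of_le (fun n => norm_nonneg _) (fun n => ?_) hsummable
    rw [norm_mul]
    exact mul_le_mul (keyφ n) (keyψ n) (norm_nonneg _) (by positivity)
  · rintro h ⟨f, g, hrep⟩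
    obtain ⟨F, G, hFG, hle⟩ :=
      construct k φ ψ T S hφ hψ hTcol hScol θ hθ h f g hrep
    refine ⟨⟨F, G, hFG⟩, ?_⟩
    have hBbdd : BddBelow { c : ℝ | ∃ F G : ℕ → H,
        IsWPRep k (fun x => θ x * h x) F G ∧ c = ∑' i, ‖F i‖ * ‖G i‖ } := by
      refine ⟨0, fun c hc => ?_⟩
      obtain ⟨F', G', _, rfl⟩ := hc
      exact tsum_nonneg fun i => mul_nonneg (norm_nonneg _) (norm_nonneg _)
    have hAne : { c : ℝ | ∃ f g : ℕ → H,
        IsWPRep k h f g ∧ c = ∑' i, ‖f i‖ * ‖g i‖ }.Nonempty :=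
      ⟨_, f, g, hrep, rfl⟩
    refine le_csInf hAne ?_
    rintro c ⟨f', g', hrep', rfl⟩
    obtain ⟨F', G', hFG', hle'⟩ :=
      construct k φ ψ T S hφ hψ hTcol hScol θ hθ h f' g' hrep'
    exact (csInf_le hBbdd ⟨F', G', hFG', rfl⟩).trans hle'
end

section
/- For commuting operators T_1, T_2 on a Hilbert space H with T_1 T_2 = T_2 T_1 and T_1 T_1* + T_2 T_2* ≤ I, and n ≥ 1, define S_k = binom(n,k)^{1/2} · T_1^k T_2^{n-k} for 0 ≤ k ≤ n. Then ∑_{k=0}^n S_k S_k* ≤ I. -/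
/-! The map `Φ X = T₁ X T₁* + T₂ X T₂*` is monotone for the operator order and `Φ 1 ≤ 1`, hence
`Φⁿ 1 ≤ 1`. As `T₁` and `T₂` commute, so do the two conjugations making up `Φ`, and the binomial
theorem expands `Φⁿ 1` as `∑ₖ binom(n,k) T₁ᵏT₂ⁿ⁻ᵏ (T₁ᵏT₂ⁿ⁻ᵏ)*`. -/

section StarConj
variable {R : Type*} [Semiring R] [StarRing R]

def starConjEnd (a : R) : Module.End ℕ R where
  toFun x := a * x * star a
  map_add' x y := by simp only [mul_add, add_mul]
  map_smul' k x := by simp only [mul_smul_comm, smul_mul_assoc, RingHom.id_apply]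

@[simp] lemma starConjEnd_apply (a x : R) : starConjEnd a x = a * x * star a := rfl

lemma starConjEnd_pow_apply (a x : R) (k : ℕ) :
    (starConjEnd a ^ k) x = a ^ k * x * star (a ^ k) := by
  induction k with
  | zero => simp
  | succ k ih =>
    rw [pow_succ', Module.End.mul_apply, ih, starConjEnd_apply, pow_succ', star_mul]
    simp only [mul_assoc]

lemma commute_starConjEnd {a b : R} (h : Commute a b) :
    Commute (starConjEnd a) (starConjEnd b) := by
  ext x
  simp only [Module.End.mul_apply, starConjEnd_apply, mul_assoc]
  rw [(commute_star_star.2 h).eq, ← mul_assoc a, h.eq, mul_assoc]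

lemma add_starConjEnd_pow_apply_one_eq_sum {a b : R} (h : Commute a b) (n : ℕ) :
    ((starConjEnd a + starConjEnd b) ^ n) 1 =
      ∑ k ∈ Finset.range (n + 1),
        n.choose k • (a ^ k * b ^ (n - k) * star (a ^ k * b ^ (n - k))) := by
  rw [(commute_starConjEnd h).add_pow, LinearMap.sum_apply]
  refine Finset.sum_congr rfl fun k _ => ?_
  simp only [Module.End.mul_apply, Module.End.natCast_apply, map_nsmul,
    starConjEnd_pow_apply, star_mul, mul_one, mul_assoc]

variable [PartialOrder R] [StarOrderedRing R]

lemma starConjEnd_monotone (a : R) : Monotone (starConjEnd a) :=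
  fun _ _ hxy => star_right_conjugate_le_conjugate hxy a

lemma add_starConjEnd_pow_apply_one_le_one {a b : R} (h : a * star a + b * star b ≤ 1) (n : ℕ) :
    ((starConjEnd a + starConjEnd b) ^ n) 1 ≤ 1 := by
  have hmono : Monotone (starConjEnd a + starConjEnd b) :=
    (starConjEnd_monotone a).add (starConjEnd_monotone b)
  have hone : (starConjEnd a + starConjEnd b) 1 ≤ 1 := by
    simpa only [LinearMap.add_apply, starConjEnd_apply, mul_one] using h
  rw [Module.End.coe_pow]
  exact hmono.antitone_iterate_of_map_le hone n.zero_le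

end StarConj

lemma ofReal_sqrt_smul_mul_star {A : Type*} [Ring A] [StarRing A] [Algebra ℂ A] [StarModule ℂ A]
    {r : ℝ} (hr : 0 ≤ r) (x : A) :
    ((Real.sqrt r : ℂ) • x) * star ((Real.sqrt r : ℂ) • x) = (r : ℂ) • (x * star x) := by
  rw [star_smul, smul_mul_smul_comm, Complex.star_def, Complex.conj_ofReal, ← Complex.ofReal_mul,
    Real.mul_self_sqrt hr]

theorem stmt8_general {H : Type*} [NormedAddCommGroup H] [InnerProductSpace ℂ H] [CompleteSpace H]
    (T₁ T₂ : H →L[ℂ] H) (hcomm : T₁ * T₂ = T₂ * T₁)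
    (hrow : ContinuousLinearMap.IsPositive
      ((1 : H →L[ℂ] H) - (T₁ * star T₁ + T₂ * star T₂)))
    (n : ℕ) :
    ContinuousLinearMap.IsPositive ((1 : H →L[ℂ] H) -
      ∑ k ∈ Finset.range (n + 1),
        ((Real.sqrt (n.choose k) : ℂ) • (T₁ ^ k * T₂ ^ (n - k))) *
          star ((Real.sqrt (n.choose k) : ℂ) • (T₁ ^ k * T₂ ^ (n - k)))) := by
  rw [← ContinuousLinearMap.le_def] at hrow ⊢
  have hsum : ∑ k ∈ Finset.range (n + 1),
      ((Real.sqrt (n.choose k) : ℂ) • (T₁ ^ k * T₂ ^ (n - k))) *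
        star ((Real.sqrt (n.choose k) : ℂ) • (T₁ ^ k * T₂ ^ (n - k))) =
      ((starConjEnd T₁ + starConjEnd T₂) ^ n) 1 := by
    rw [add_starConjEnd_pow_apply_one_eq_sum hcomm]
    refine Finset.sum_congr rfl fun k _ => ?_
    rw [ofReal_sqrt_smul_mul_star (Nat.cast_nonneg _), Complex.ofReal_natCast,
      Nat.cast_smul_eq_nsmul]
  rw [hsum]
  exact add_starConjEnd_pow_apply_one_le_one hrow n

/-- For commuting operators `T₁, T₂` on a Hilbert space with
`T₁T₁* + T₂T₂* ≤ I`, and `n ≥ 1`, the operators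
`S_k = binom(n,k)^{1/2} T₁^k T₂^{n-k}` (`0 ≤ k ≤ n`) satisfy `∑ₖ S_k S_k* ≤ I`.
(The operator order `A ≤ B` is expressed as `(B - A).IsPositive`.) -/
theorem stmt8 {H : Type*} [NormedAddCommGroup H] [InnerProductSpace ℂ H] [CompleteSpace H]
    (T₁ T₂ : H →L[ℂ] H) (hcomm : T₁ * T₂ = T₂ * T₁)
    (hrow : ContinuousLinearMap.IsPositive
      ((1 : H →L[ℂ] H) - (T₁ * star T₁ + T₂ * star T₂)))
    (n : ℕ) (hn : 1 ≤ n) :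
    ContinuousLinearMap.IsPositive ((1 : H →L[ℂ] H) -
      ∑ k ∈ Finset.range (n + 1),
        ((Real.sqrt (n.choose k) : ℂ) • (T₁ ^ k * T₂ ^ (n - k))) *
          star ((Real.sqrt (n.choose k) : ℂ) • (T₁ ^ k * T₂ ^ (n - k)))) :=
  stmt8_general T₁ T₂ hcomm hrow n
end

section
/- Let H be a Hilbert space, and let [A_{ij}] ∈ M_n(B(H)). Suppose that for every pair of tuples (f_i)_{i=1}^n, (g_i)_{i=1}^n in H with ∑‖f_i‖² = ∑‖g_i‖² = 1, there exist contractions C, R (C: H → H ⊗ ℓ² a column of operators commuting appropriately, R similar) and unit vectors F, G ∈ H with f_i = C_i F and g_i = R_i G for all i. Then ‖[A_{ij}]‖_{B(H^n)} = sup { ‖∑_{i,j} R_i* A_{ij} C_j‖ }, where the supremum is over all such contractive columns C = (C_j) and R = (R_i). -/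
/-!
The identity `⟪TA (Cⱼ x)ⱼ, (Rᵢ y)ᵢ⟫ = ⟪∑ᵢⱼ Rᵢ* Aᵢⱼ Cⱼ x, y⟫` compares the two norms, both read off
from `‖⟪T x, y⟫‖` on unit vectors. For contractive columns the vectors `(Cⱼ x)`, `(Rᵢ y)` lie in
the unit ball of `Hⁿ`, so every compression has norm at most `‖TA‖`; conversely the factorization
hypothesis writes every pair of unit vectors of `Hⁿ` in this form with `‖x‖, ‖y‖ ≤ 1`.
-/

open scoped InnerProductSpace

theorem ContinuousLinearMap.opNorm_le_of_unit_inner_le {𝕜 E F : Type*} [RCLike 𝕜]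
    [NormedAddCommGroup E] [InnerProductSpace 𝕜 E] [NormedAddCommGroup F]
    [InnerProductSpace 𝕜 F] (T : E →L[𝕜] F) {M : ℝ} (hM : 0 ≤ M)
    (h : ∀ x y, ‖x‖ = 1 → ‖y‖ = 1 → ‖⟪T x, y⟫_𝕜‖ ≤ M) : ‖T‖ ≤ M :=
  T.opNorm_le_of_unit_norm hM fun x hx =>
    (innerSL_apply_norm 𝕜 (T x)).ge.trans <|
      (innerSL 𝕜 (T x)).opNorm_le_of_unit_norm hM fun y hy => h x y hx hy

theorem PiLp.norm_toLp_two_le_of_sum_norm_sq_le {ι : Type*} [Fintype ι] {β : ι → Type*}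
    [∀ i, NormedAddCommGroup (β i)] {v : ∀ i, β i} {r : ℝ} (hr : 0 ≤ r)
    (h : ∑ i, ‖v i‖ ^ 2 ≤ r ^ 2) : ‖WithLp.toLp 2 v‖ ≤ r := by
  refine (pow_le_pow_iff_left₀ (norm_nonneg _) hr two_ne_zero).mp ?_
  simpa [PiLp.norm_sq_eq_of_L2] using h

section Column

variable {𝕜 ι H : Type*} [RCLike 𝕜] [Fintype ι] [NormedAddCommGroup H] [InnerProductSpace 𝕜 H]

/-- `∑ᵢ Cᵢ* Cᵢ ≤ 1`, i.e. `x ↦ (Cᵢ x)ᵢ` is a contraction `H → Hⁿ`. -/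
def IsContractiveColumn (C : ι → H →L[𝕜] H) : Prop :=
  ∀ x : H, ∑ i, ‖C i x‖ ^ 2 ≤ ‖x‖ ^ 2

theorem IsContractiveColumn.norm_toLp_le {C : ι → H →L[𝕜] H} (hC : IsContractiveColumn C)
    (x : H) : ‖WithLp.toLp 2 (fun i => C i x)‖ ≤ ‖x‖ :=
  PiLp.norm_toLp_two_le_of_sum_norm_sq_le (norm_nonneg x) (hC x)

variable [CompleteSpace H] (A : ι → ι → H →L[𝕜] H)
  (TA : PiLp 2 (fun _ : ι => H) →L[𝕜] PiLp 2 (fun _ : ι => H))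

theorem inner_apply_toLp_column (hTA : ∀ f i, TA f i = ∑ j, A i j (f j))
    (C R : ι → H →L[𝕜] H) (x y : H) :
    ⟪TA (WithLp.toLp 2 fun j => C j x), WithLp.toLp 2 fun i => R i y⟫_𝕜
      = ⟪(∑ i, ∑ j, star (R i) * A i j * C j) x, y⟫_𝕜 := by
  simp only [PiLp.inner_apply, hTA, sum_apply, sum_inner,
    mul_apply_eq_comp,
    ContinuousLinearMap.star_eq_adjoint,
    ContinuousLinearMap.adjoint_inner_left]

theorem norm_sum_star_mul_mul_le (hTA : ∀ f i, TA f i = ∑ j, A i j (f j))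
    {C R : ι → H →L[𝕜] H} (hC : IsContractiveColumn C) (hR : IsContractiveColumn R) :
    ‖∑ i, ∑ j, star (R i) * A i j * C j‖ ≤ ‖TA‖ := by
  refine ContinuousLinearMap.opNorm_le_of_unit_inner_le _ (norm_nonneg TA) fun x y hx hy => ?_
  rw [← inner_apply_toLp_column A TA hTA]
  calc _ ≤ ‖TA (WithLp.toLp 2 fun j => C j x)‖ * ‖WithLp.toLp 2 fun i => R i y‖ :=
        norm_inner_le_norm _ _
    _ ≤ (‖TA‖ * ‖x‖) * ‖y‖ := by
        gcongr
        · exact TA.le_opNorm_of_le (hC.norm_toLp_le x)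
        · exact hR.norm_toLp_le y
    _ = ‖TA‖ := by rw [hx, hy, mul_one, mul_one]

theorem norm_le_of_factorization (hTA : ∀ f i, TA f i = ∑ j, A i j (f j))
    (hfact : ∀ f g : ι → H, ∑ i, ‖f i‖ ^ 2 = 1 → ∑ i, ‖g i‖ ^ 2 = 1 →
      ∃ (C R : ι → H →L[𝕜] H) (F G : H), IsContractiveColumn C ∧ IsContractiveColumn R ∧
        ‖F‖ ≤ 1 ∧ ‖G‖ ≤ 1 ∧ (∀ i, f i = C i F) ∧ (∀ i, g i = R i G))
    {M : ℝ} (hM : 0 ≤ M) (hbound : ∀ C R : ι → H →L[𝕜] H, IsContractiveColumn C →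
      IsContractiveColumn R → ‖∑ i, ∑ j, star (R i) * A i j * C j‖ ≤ M) :
    ‖TA‖ ≤ M := by
  refine TA.opNorm_le_of_unit_inner_le hM fun f g hf hg => ?_
  have unit_sum {v : PiLp 2 (fun _ : ι => H)} (hv : ‖v‖ = 1) : ∑ i, ‖v i‖ ^ 2 = 1 := by
    rw [← PiLp.norm_sq_eq_of_L2, hv, one_pow]
  obtain ⟨C, R, F, G, hC, hR, hF, hG, hfC, hgR⟩ := hfact (f ·) (g ·) (unit_sum hf) (unit_sum hg)
  have hf' : f = WithLp.toLp 2 fun j => C j F := by ext i; exact hfC i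
  have hg' : g = WithLp.toLp 2 fun i => R i G := by ext i; exact hgR i
  set S := ∑ i, ∑ j, star (R i) * A i j * C j
  rw [hf', hg', inner_apply_toLp_column A TA hTA]
  calc _ ≤ ‖S F‖ * ‖G‖ := norm_inner_le_norm _ _
    _ ≤ (‖S‖ * 1) * 1 := by gcongr; exact S.le_opNorm_of_le hF
    _ ≤ M := by simpa using hbound C R hC hR

end Column

/-- (Matricial norming.) Let `[A_{ij}] ∈ Mₙ(B(H))`, realized
as the operator `TA : Hⁿ → Hⁿ`. Suppose every pair of unit vectors
`(fᵢ), (gᵢ) ∈ Hⁿ` factors as `fᵢ = Cᵢ F`, `gᵢ = Rᵢ G` with contractive columns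
`C, R` and vectors `F, G` of norm at most `1`. Then
`‖[A_{ij}]‖_{B(Hⁿ)} = sup ‖∑_{i,j} Rᵢ* A_{ij} Cⱼ‖`, the supremum being over all
contractive columns `C = (Cⱼ)`, `R = (Rᵢ)`. -/
theorem stmt19 {H : Type*} [NormedAddCommGroup H] [InnerProductSpace ℂ H] [CompleteSpace H]
    (n : ℕ) (A : Fin n → Fin n → (H →L[ℂ] H))
    (TA : PiLp 2 (fun _ : Fin n => H) →L[ℂ] PiLp 2 (fun _ : Fin n => H))
    (hTA : ∀ (f : PiLp 2 (fun _ : Fin n => H)) (i : Fin n), TA f i = ∑ j, A i j (f j))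
    (hfact : ∀ f g : Fin n → H, ∑ i, ‖f i‖ ^ 2 = 1 → ∑ i, ‖g i‖ ^ 2 = 1 →
      ∃ (C R : Fin n → H →L[ℂ] H) (F G : H),
        (∀ x : H, ∑ i, ‖C i x‖ ^ 2 ≤ ‖x‖ ^ 2) ∧
        (∀ x : H, ∑ i, ‖R i x‖ ^ 2 ≤ ‖x‖ ^ 2) ∧
        ‖F‖ ≤ 1 ∧ ‖G‖ ≤ 1 ∧ (∀ i, f i = C i F) ∧ (∀ i, g i = R i G)) :
    ‖TA‖ = sSup { r : ℝ | ∃ C R : Fin n → H →L[ℂ] H,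
      (∀ x : H, ∑ i, ‖C i x‖ ^ 2 ≤ ‖x‖ ^ 2) ∧
      (∀ x : H, ∑ i, ‖R i x‖ ^ 2 ≤ ‖x‖ ^ 2) ∧
      r = ‖∑ i, ∑ j, star (R i) * A i j * C j‖ } := by
  have le_norm_TA : ∀ r ∈ { r : ℝ | ∃ C R : Fin n → H →L[ℂ] H, IsContractiveColumn C ∧
      IsContractiveColumn R ∧ r = ‖∑ i, ∑ j, star (R i) * A i j * C j‖ }, r ≤ ‖TA‖ := by
    rintro _ ⟨C, R, hC, hR, rfl⟩
    exact norm_sum_star_mul_mul_le A TA hTA hC hR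
  refine le_antisymm ?_ (Real.sSup_le le_norm_TA (norm_nonneg TA))
  refine norm_le_of_factorization A TA hTA hfact ?_ fun C R hC hR =>
    le_csSup ⟨‖TA‖, le_norm_TA⟩ ⟨C, R, hC, hR, rfl⟩
  exact Real.sSup_nonneg (by rintro _ ⟨C, R, -, -, rfl⟩; exact norm_nonneg _)
end
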